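/- arXiv:2505.18063 — 2 statements merged into one kernel-verified Lean document; each statement's English description precedes it below -/
import Mathlib

section
/- Let n ≥ 3, let e₁,…,eₙ be the standard basis of ℝⁿ, and let γ₁, γ₂, γ₃ be real numbers satisfying the non-flatness condition (Γ). Define Π₁ = span(e₁,…,e_{n−1}), Π₂ = span(e₁,…,e_{n−2}, e_{n−1}+γ₁eₙ), Π₃ = span(e₁,…,e_{n−3}, e_{n−2}+γ₃eₙ, e_{n−1}+γ₂eₙ). If g and g′ are n×n real symmetric matrices such that ⟨gu, v⟩ = ⟨g′u, v⟩ for all u, v ∈ Πₖ and each k = 1, 2, 3, then g = g′. -/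
open Matrix

lemma aux_quad {n : ℕ} (g : Matrix (Fin n) (Fin n) ℝ) (a b p q : Fin n) (c d : ℝ) :
    (g *ᵥ ((Pi.single a 1 : Fin n → ℝ) + c • (Pi.single b 1 : Fin n → ℝ))) ⬝ᵥ
      ((Pi.single p 1 : Fin n → ℝ) + d • (Pi.single q 1 : Fin n → ℝ))
      = g p a + c * g p b + d * g q a + c * (d * g q b) := by
  simp [Matrix.mulVec_add, Matrix.mulVec_smul, dotProduct_add, Matrix.mulVec_single,
    dotProduct_single, dotProduct_smul]
  ring

lemma aux_single {n : ℕ} (g : Matrix (Fin n) (Fin n) ℝ) (a p : Fin n) :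
    (g *ᵥ (Pi.single a 1 : Fin n → ℝ)) ⬝ᵥ (Pi.single p 1 : Fin n → ℝ) = g p a := by
  simp [Matrix.mulVec_single, dotProduct_single]

lemma aux_mixed {n : ℕ} (g : Matrix (Fin n) (Fin n) ℝ) (a p q : Fin n) (d : ℝ) :
    (g *ᵥ (Pi.single a 1 : Fin n → ℝ)) ⬝ᵥ
      ((Pi.single p 1 : Fin n → ℝ) + d • (Pi.single q 1 : Fin n → ℝ))
      = g p a + d * g q a := by
  simp [Matrix.mulVec_single, dotProduct_add, dotProduct_single,
    dotProduct_smul]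

set_option maxHeartbeats 1000000 in
/-- Let `n ≥ 3` and let `γ₁, γ₂, γ₃` satisfy the non-flatness condition (Γ).
If two `n×n` real symmetric matrices have equal tangential components on the three tangent
planes `P₁ = span(e₁,…,e_{n-1})`, `P₂ = span(e₁,…,e_{n-2}, e_{n-1}+γ₁eₙ)`,
`P₃ = span(e₁,…,e_{n-3}, e_{n-2}+γ₃eₙ, e_{n-1}+γ₂eₙ)`, then they coincide. -/
theorem symm_matrix_determined_by_tangential_data (n : ℕ) (hn : 3 ≤ n)
    (γ₁ γ₂ γ₃ : ℝ)
    (hΓ : (γ₁ ≠ 0 ∧ γ₃ ≠ 0) ∨ (γ₁ ≠ 0 ∧ γ₃ = 0 ∧ γ₂ ≠ 0 ∧ γ₁ ≠ γ₂))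
    (g g' : Matrix (Fin n) (Fin n) ℝ) (hg : g.IsSymm) (hg' : g'.IsSymm)
    (P₁ P₂ P₃ : Submodule ℝ (Fin n → ℝ))
    (hP₁ : P₁ = Submodule.span ℝ
      {v | ∃ i : Fin n, (i : ℕ) < n - 1 ∧ v = Pi.single i 1})
    (hP₂ : P₂ = Submodule.span ℝ
      ({v | ∃ i : Fin n, (i : ℕ) < n - 2 ∧ v = Pi.single i 1} ∪
        {(Pi.single (⟨n - 2, by omega⟩ : Fin n) 1 : Fin n → ℝ)
          + γ₁ • (Pi.single (⟨n - 1, by omega⟩ : Fin n) 1 : Fin n → ℝ)}))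
    (hP₃ : P₃ = Submodule.span ℝ
      ({v | ∃ i : Fin n, (i : ℕ) < n - 3 ∧ v = Pi.single i 1} ∪
        {(Pi.single (⟨n - 3, by omega⟩ : Fin n) 1 : Fin n → ℝ)
          + γ₃ • (Pi.single (⟨n - 1, by omega⟩ : Fin n) 1 : Fin n → ℝ),
         (Pi.single (⟨n - 2, by omega⟩ : Fin n) 1 : Fin n → ℝ)
          + γ₂ • (Pi.single (⟨n - 1, by omega⟩ : Fin n) 1 : Fin n → ℝ)}))
    (h1 : ∀ u ∈ P₁, ∀ v ∈ P₁, (g *ᵥ u) ⬝ᵥ v = (g' *ᵥ u) ⬝ᵥ v)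
    (h2 : ∀ u ∈ P₂, ∀ v ∈ P₂, (g *ᵥ u) ⬝ᵥ v = (g' *ᵥ u) ⬝ᵥ v)
    (h3 : ∀ u ∈ P₃, ∀ v ∈ P₃, (g *ᵥ u) ⬝ᵥ v = (g' *ᵥ u) ⬝ᵥ v) :
    g = g' := by
  have hγ₁ : γ₁ ≠ 0 := by rcases hΓ with ⟨h, _⟩ | ⟨h, _⟩ <;> exact h
  set N1 : Fin n := ⟨n - 1, by omega⟩ with hN1
  set N2 : Fin n := ⟨n - 2, by omega⟩ with hN2
  set N3 : Fin n := ⟨n - 3, by omega⟩ with hN3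
  -- memberships
  have mem1 : ∀ i : Fin n, (i : ℕ) < n - 1 → (Pi.single i 1 : Fin n → ℝ) ∈ P₁ := by
    intro i hi; rw [hP₁]; exact Submodule.subset_span ⟨i, hi, rfl⟩
  have mem2a : ∀ i : Fin n, (i : ℕ) < n - 2 → (Pi.single i 1 : Fin n → ℝ) ∈ P₂ := by
    intro i hi; rw [hP₂]; exact Submodule.subset_span (Or.inl ⟨i, hi, rfl⟩)
  have mem2b : ((Pi.single N2 1 : Fin n → ℝ) + γ₁ • (Pi.single N1 1 : Fin n → ℝ)) ∈ P₂ := by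
    rw [hP₂]; exact Submodule.subset_span (Or.inr rfl)
  have mem3b : ((Pi.single N3 1 : Fin n → ℝ) + γ₃ • (Pi.single N1 1 : Fin n → ℝ)) ∈ P₃ := by
    rw [hP₃]; exact Submodule.subset_span (Or.inr (Or.inl rfl))
  have mem3c : ((Pi.single N2 1 : Fin n → ℝ) + γ₂ • (Pi.single N1 1 : Fin n → ℝ)) ∈ P₃ := by
    rw [hP₃]; exact Submodule.subset_span (Or.inr (Or.inr rfl))
  -- entries with both indices < n-1
  have hA : ∀ i j : Fin n, (i : ℕ) < n - 1 → (j : ℕ) < n - 1 → g i j = g' i j := by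
    intro i j hi hj
    have := h1 _ (mem1 j hj) _ (mem1 i hi)
    rwa [aux_single, aux_single] at this
  -- entries g N1 j for j < n-2
  have hB : ∀ j : Fin n, (j : ℕ) < n - 2 → g N1 j = g' N1 j := by
    intro j hj
    have h := h2 _ (mem2a j hj) _ mem2b
    rw [aux_mixed, aux_mixed] at h
    have hA' : g N2 j = g' N2 j := hA N2 j (by simp [hN2]; omega) (by omega)
    have : γ₁ * g N1 j = γ₁ * g' N1 j := by linarith
    exact mul_left_cancel₀ hγ₁ this
  -- equation from P₂ with u = v = w
  have eq2 : 2 * γ₁ * (g N1 N2 - g' N1 N2) + γ₁ * γ₁ * (g N1 N1 - g' N1 N1) = 0 := by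
    have h := h2 _ mem2b _ mem2b
    rw [aux_quad, aux_quad] at h
    have hs : g N2 N1 = g N1 N2 := hg.apply N1 N2
    have hs' : g' N2 N1 = g' N1 N2 := hg'.apply N1 N2
    have hA' : g N2 N2 = g' N2 N2 := hA N2 N2 (by simp [hN2]; omega) (by simp [hN2]; omega)
    linear_combination h - hA' - γ₁ * hs + γ₁ * hs'
  -- the diagonal corner entry
  have hy : g N1 N1 = g' N1 N1 := by
    rcases hΓ with ⟨_, hγ₃⟩ | ⟨_, hγ₃, hγ₂, hne⟩
    · -- use u = v = a from P₃
      have h := h3 _ mem3b _ mem3b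
      rw [aux_quad, aux_quad] at h
      have hA' : g N3 N3 = g' N3 N3 := hA N3 N3 (by simp [hN3]; omega) (by simp [hN3]; omega)
      have hB' : g N1 N3 = g' N1 N3 := hB N3 (by simp [hN3]; omega)
      have hs : g N3 N1 = g N1 N3 := hg.apply N1 N3
      have hs' : g' N3 N1 = g' N1 N3 := hg'.apply N1 N3
      have h2' : γ₃ * γ₃ * (g N1 N1 - g' N1 N1) = 0 := by
        linear_combination h - hA' - γ₃ * hs + γ₃ * hs' - 2 * γ₃ * hB'
      have := mul_eq_zero.mp h2'
      rcases this with h' | h'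
      · exact absurd h' (mul_ne_zero hγ₃ hγ₃)
      · linarith
    · -- γ₃ = 0 case: use u = v = b from P₃
      have h := h3 _ mem3c _ mem3c
      rw [aux_quad, aux_quad] at h
      have hs : g N2 N1 = g N1 N2 := hg.apply N1 N2
      have hs' : g' N2 N1 = g' N1 N2 := hg'.apply N1 N2
      have hA' : g N2 N2 = g' N2 N2 := hA N2 N2 (by simp [hN2]; omega) (by simp [hN2]; omega)
      have eq3 : 2 * γ₂ * (g N1 N2 - g' N1 N2) + γ₂ * γ₂ * (g N1 N1 - g' N1 N1) = 0 := by
        linear_combination h - hA' - γ₂ * hs + γ₂ * hs'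
      -- from eq2 and eq3: (γ₁ - γ₂) * y = 0
      have e1 : 2 * (g N1 N2 - g' N1 N2) + γ₁ * (g N1 N1 - g' N1 N1) = 0 := by
        apply mul_left_cancel₀ hγ₁; rw [mul_zero]; linear_combination eq2
      have e2 : 2 * (g N1 N2 - g' N1 N2) + γ₂ * (g N1 N1 - g' N1 N1) = 0 := by
        apply mul_left_cancel₀ hγ₂; rw [mul_zero]; linear_combination eq3
      have : (γ₁ - γ₂) * (g N1 N1 - g' N1 N1) = 0 := by linear_combination e1 - e2
      rcases mul_eq_zero.mp this with h' | h'
      · exact absurd (by linarith : γ₁ = γ₂) hne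
      · linarith
  -- the off-diagonal entry g N1 N2
  have hx : g N1 N2 = g' N1 N2 := by
    have : 2 * γ₁ * (g N1 N2 - g' N1 N2) = 0 := by
      linear_combination eq2 - γ₁ * γ₁ * hy
    rcases mul_eq_zero.mp this with h' | h'
    · exact absurd h' (mul_ne_zero two_ne_zero hγ₁)
    · linarith
  -- full row N1
  have hrow : ∀ j : Fin n, g N1 j = g' N1 j := by
    intro j
    rcases Nat.lt_or_ge (j : ℕ) (n - 2) with hj | hj
    · exact hB j hj
    · have hj' : (j : ℕ) = n - 2 ∨ (j : ℕ) = n - 1 := by omega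
      rcases hj' with hj' | hj'
      · have : j = N2 := Fin.ext (by simp [hN2, hj'])
        rw [this]; exact hx
      · have : j = N1 := Fin.ext (by simp [hN1, hj'])
        rw [this]; exact hy
  ext i j
  rcases Nat.lt_or_ge (i : ℕ) (n - 1) with hi | hi
  · rcases Nat.lt_or_ge (j : ℕ) (n - 1) with hj | hj
    · exact hA i j hi hj
    · have : j = N1 := Fin.ext (by simp [hN1]; omega)
      rw [this, ← hg.apply, ← hg'.apply]
      exact hrow i
  · have : i = N1 := Fin.ext (by simp [hN1]; omega)
    rw [this]; exact hrow j
end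

section
/- Let n ≥ 3 be an integer, λ ≥ 1, and let σ be an n×n real symmetric matrix that is uniformly elliptic with constant λ. Define Γ_σ(x) = (⟨σ⁻¹x, x⟩)^{(2−n)/2} for x ∈ ℝⁿ∖{0}. Then the Hessian of Γ_σ satisfies the operator-norm bound ‖D²Γ_σ(x)‖ ≤ (n−2)(n+1) λ^{(n+6)/2} |x|^{−n} for every x ≠ 0. -/
/-!
Write `Q x = ⟪σ⁻¹ x, x⟫` and `p = (2 - n) / 2`. The Hessian of `Q ^ p` at `x` is the bilinear form
`2 p Q^(p-1) ⟪σ⁻¹ u, w⟫ + 4 p (p-1) Q^(p-2) ⟪σ⁻¹ x, u⟫ ⟪σ⁻¹ x, w⟫`. Ellipticity of `σ` passes to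
`σ⁻¹` in the two forms `‖σ⁻¹ v‖² ≤ λ Q v` (so also `‖σ⁻¹ v‖ ≤ λ ‖v‖`) and `λ⁻¹ ‖v‖² ≤ Q v`
(Cauchy–Schwarz for the positive form of `σ`). The first bounds the Hessian by
`(2|p| + 4|p(p-1)|) λ Q(x)^(p-1) = (n-2)(n+1) λ Q(x)^(-n/2)`, the second gives
`Q(x)^(-n/2) ≤ λ^(n/2) ‖x‖^(-n)`; since `λ ≥ 1`, `λ^((n+2)/2) ≤ λ^((n+6)/2)`.
-/

open Matrix RealInnerProductSpace

section InnerProductSpace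

variable {E : Type*} [NormedAddCommGroup E] [InnerProductSpace ℝ E]

def IsUniformlyElliptic (T : E →L[ℝ] E) (l : ℝ) : Prop :=
  ∀ ξ, l⁻¹ * ‖ξ‖ ^ 2 ≤ ⟪T ξ, ξ⟫ ∧ ⟪T ξ, ξ⟫ ≤ l * ‖ξ‖ ^ 2

theorem ContinuousLinearMap.IsPositive.inner_map_sq_le {T : E →L[ℝ] E} (hT : T.IsPositive)
    (x y : E) : ⟪T x, y⟫ ^ 2 ≤ ⟪T x, x⟫ * ⟪T y, y⟫ :=
  LinearMap.BilinForm.apply_sq_le_of_symm ((innerₗ E).comp (T : E →ₗ[ℝ] E))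
    hT.inner_nonneg_left ⟨fun u v => by simpa [real_inner_comm] using (hT.isSymmetric v u).symm⟩ x y

namespace IsUniformlyElliptic

variable {T A : E →L[ℝ] E} {l : ℝ}

theorem isPositive (hT : IsUniformlyElliptic T l) (hsymm : T.IsSymmetric) (hl : 0 < l) :
    T.IsPositive :=
  (T.isPositive_iff).2 ⟨hsymm, fun ξ => (by positivity : 0 ≤ l⁻¹ * ‖ξ‖ ^ 2).trans (hT ξ).1⟩

theorem isUnit [CompleteSpace E] (hT : IsUniformlyElliptic T l) (hl : 0 < l) : IsUnit T :=
  T.isUnit_of_forall_le_norm_inner_map (c := ⟨l⁻¹, (inv_pos.2 hl).le⟩)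
    (NNReal.coe_pos.1 (inv_pos.2 hl)) fun ξ => by
      show ‖ξ‖ ^ 2 * l⁻¹ ≤ _
      rw [mul_comm]
      exact (hT ξ).1.trans (Real.le_norm_self _)

theorem norm_sq_apply_le_of_leftInverse (hT : IsUniformlyElliptic T l) (hl : 0 < l)
    (hTA : Function.LeftInverse T A) (v : E) : ‖A v‖ ^ 2 ≤ l * ⟪A v, v⟫ := by
  have h := (hT (A v)).1
  rwa [hTA v, real_inner_comm, inv_mul_le_iff₀ hl] at h

theorem inv_mul_norm_sq_le_inner_of_leftInverse (hT : IsUniformlyElliptic T l)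
    (hsymm : T.IsSymmetric) (hl : 0 < l) (hTA : Function.LeftInverse T A) (v : E) :
    l⁻¹ * ‖v‖ ^ 2 ≤ ⟪A v, v⟫ := by
  have hpos := hT.isPositive hsymm hl
  have hQ : 0 ≤ ⟪A v, v⟫ := by
    simpa [hTA v, real_inner_comm] using hpos.inner_nonneg_left (A v)
  have hCS : (‖v‖ ^ 2) ^ 2 ≤ ⟪A v, v⟫ * (l * ‖v‖ ^ 2) := by
    have h := hpos.inner_map_sq_le (A v) v
    rw [hTA v, real_inner_self_eq_norm_sq, real_inner_comm] at h
    exact h.trans (mul_le_mul_of_nonneg_left (hT v).2 hQ)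
  rcases (norm_nonneg v).eq_or_lt with hv | hv
  · simp [← hv, hQ]
  · rw [inv_mul_le_iff₀ hl]
    nlinarith [pow_pos hv 2]

end IsUniformlyElliptic

variable {A : E →L[ℝ] E}

theorem norm_apply_le_of_norm_sq_le_mul_inner {l : ℝ} (hl : 0 ≤ l)
    (hAl : ∀ v, ‖A v‖ ^ 2 ≤ l * ⟪A v, v⟫) (v : E) : ‖A v‖ ≤ l * ‖v‖ := by
  have h : ‖A v‖ * ‖A v‖ ≤ l * ‖v‖ * ‖A v‖ := calc
    ‖A v‖ * ‖A v‖ = ‖A v‖ ^ 2 := (sq _).symm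
    _ ≤ l * ⟪A v, v⟫ := hAl v
    _ ≤ l * (‖A v‖ * ‖v‖) := by gcongr; exact real_inner_le_norm _ _
    _ = l * ‖v‖ * ‖A v‖ := by ring
  rcases (norm_nonneg (A v)).eq_or_lt with h0 | h0
  · rw [← h0]; positivity
  · exact le_of_mul_le_mul_right h h0

theorem hasFDerivAt_inner_apply_self (hA : A.IsSymmetric) (x : E) :
    HasFDerivAt (fun y => ⟪A y, y⟫) ((2 : ℝ) • innerSL ℝ (A x)) x := by
  refine ((A.hasFDerivAt (x := x)).inner ℝ (hasFDerivAt_id x)).congr_fderiv ?_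
  ext h
  simp only [ContinuousLinearMap.comp_apply, ContinuousLinearMap.prod_apply, fderivInnerCLM_apply,
    ContinuousLinearMap.coe_id', id_eq, _root_.smul_apply, innerSL_apply_apply]
  have hsymm : ⟪A h, x⟫ = ⟪A x, h⟫ := (hA h x).trans (real_inner_comm _ _)
  rw [hsymm, two_smul]

theorem fderiv_fderiv_rpow_inner_apply_self_apply (hA : A.IsSymmetric) (p : ℝ) {x : E}
    (hx : ⟪A x, x⟫ ≠ 0) (u w : E) :
    fderiv ℝ (fderiv ℝ fun y => ⟪A y, y⟫ ^ p) x u w =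
      2 * p * ⟪A x, x⟫ ^ (p - 1) * ⟪A u, w⟫ +
        4 * p * (p - 1) * ⟪A x, x⟫ ^ (p - 2) * ⟪A x, u⟫ * ⟪A x, w⟫ := by
  have hQ : Continuous fun y => ⟪A y, y⟫ := by fun_prop
  have hfderiv : (fderiv ℝ fun y => ⟪A y, y⟫ ^ p) =ᶠ[nhds x]
      fun y => (p * ⟪A y, y⟫ ^ (p - 1)) • (2 : ℝ) • innerSL ℝ (A y) := by
    filter_upwards [hQ.continuousAt.eventually_ne hx] with y hy
    exact ((hasFDerivAt_inner_apply_self hA y).rpow_const (Or.inl hy)).fderiv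
  have hcoeff :=
    ((hasFDerivAt_inner_apply_self hA x).rpow_const (p := p - 1) (Or.inl hx)).const_mul p
  have hgrad :
      HasFDerivAt (fun y => (2 : ℝ) • innerSL ℝ (A y)) ((2 : ℝ) • (innerSL ℝ).comp A) x :=
    ((innerSL ℝ).comp A).hasFDerivAt.const_smul (2 : ℝ)
  have hhess :
      HasFDerivAt (fun y => (p * ⟪A y, y⟫ ^ (p - 1)) • (2 : ℝ) • innerSL ℝ (A y)) _ x :=
    hcoeff.smul hgrad
  rw [hfderiv.fderiv_eq, hhess.fderiv]
  simp only [show p - 1 - 1 = p - 2 by ring, _root_.add_apply, _root_.smul_apply,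
    ContinuousLinearMap.comp_apply, ContinuousLinearMap.smulRight_apply, coe_innerSL_apply,
    smul_eq_mul]
  ring

theorem norm_fderiv_fderiv_rpow_inner_apply_self_le (hA : A.IsSymmetric) (p : ℝ) {l : ℝ}
    (hAl : ∀ v, ‖A v‖ ^ 2 ≤ l * ⟪A v, v⟫) {x : E} (hx : 0 < ⟪A x, x⟫) :
    ‖fderiv ℝ (fderiv ℝ fun y => ⟪A y, y⟫ ^ p) x‖ ≤
      (2 * |p| + 4 * |p * (p - 1)|) * l * ⟪A x, x⟫ ^ (p - 1) := by
  set Q := ⟪A x, x⟫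
  have hl : 0 ≤ l := nonneg_of_mul_nonneg_left ((sq_nonneg _).trans (hAl x)) hx
  have hQpow : Q ^ (p - 2) * Q = Q ^ (p - 1) := by
    rw [← Real.rpow_add_one hx.ne']; ring_nf
  refine ContinuousLinearMap.opNorm_le_bound _ (by positivity) fun u =>
    ContinuousLinearMap.opNorm_le_bound _ (by positivity) fun w => ?_
  rw [fderiv_fderiv_rpow_inner_apply_self_apply hA p hx.ne' u w, Real.norm_eq_abs]
  have hAuw : |⟪A u, w⟫| ≤ l * (‖u‖ * ‖w‖) := calc
    |⟪A u, w⟫| ≤ ‖A u‖ * ‖w‖ := abs_real_inner_le_norm _ _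
    _ ≤ l * ‖u‖ * ‖w‖ := by gcongr; exact norm_apply_le_of_norm_sq_le_mul_inner hl hAl u
    _ = l * (‖u‖ * ‖w‖) := mul_assoc _ _ _
  have hAxuw : |⟪A x, u⟫ * ⟪A x, w⟫| ≤ l * Q * (‖u‖ * ‖w‖) := calc
    |⟪A x, u⟫ * ⟪A x, w⟫| ≤ (‖A x‖ * ‖u‖) * (‖A x‖ * ‖w‖) := by
      rw [abs_mul]; gcongr <;> exact abs_real_inner_le_norm _ _
    _ = ‖A x‖ ^ 2 * (‖u‖ * ‖w‖) := by ring
    _ ≤ l * Q * (‖u‖ * ‖w‖) := by gcongr; exact hAl x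
  calc |2 * p * Q ^ (p - 1) * ⟪A u, w⟫ + 4 * p * (p - 1) * Q ^ (p - 2) * ⟪A x, u⟫ * ⟪A x, w⟫|
      ≤ 2 * |p| * Q ^ (p - 1) * |⟪A u, w⟫| +
          4 * |p * (p - 1)| * Q ^ (p - 2) * |⟪A x, u⟫ * ⟪A x, w⟫| := by
        refine (abs_add_le _ _).trans_eq ?_
        simp only [abs_mul, abs_two, abs_of_pos (show (0 : ℝ) < 4 by norm_num),
          abs_of_pos (Real.rpow_pos_of_pos hx _)]
        ring
    _ ≤ 2 * |p| * Q ^ (p - 1) * (l * (‖u‖ * ‖w‖)) +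
          4 * |p * (p - 1)| * Q ^ (p - 2) * (l * Q * (‖u‖ * ‖w‖)) := by gcongr
    _ = (2 * |p| + 4 * |p * (p - 1)|) * l * Q ^ (p - 1) * ‖u‖ * ‖w‖ := by
        rw [← hQpow]; ring

end InnerProductSpace

theorem Matrix.inner_toEuclideanCLM_apply_eq_sum {ι : Type*} [Fintype ι] [DecidableEq ι]
    (M : Matrix ι ι ℝ) (x y : EuclideanSpace ℝ ι) :
    ⟪toEuclideanCLM (𝕜 := ℝ) M x, y⟫ = ∑ i, ∑ j, M i j * x j * y i := by
  rw [real_inner_comm, inner_toEuclideanCLM, dotProduct]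
  simp only [mulVec, dotProduct, Finset.mul_sum]
  exact Finset.sum_congr rfl fun i _ => Finset.sum_congr rfl fun j _ => by ring

theorem Matrix.leftInverse_toEuclideanCLM_nonsing_inv {𝕜 ι : Type*} [RCLike 𝕜] [Fintype ι]
    [DecidableEq ι] {M : Matrix ι ι 𝕜} (hM : IsUnit M) :
    Function.LeftInverse (toEuclideanCLM (𝕜 := 𝕜) M) (toEuclideanCLM (𝕜 := 𝕜) M⁻¹) := fun v => by
  rw [← mul_apply_eq_comp, ← map_mul, mul_nonsing_inv M ((isUnit_iff_isUnit_det M).1 hM), map_one,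
    one_apply_eq_self]

theorem rpow_neg_half_le_of_inv_mul_sq_le {l r q s : ℝ} (hl : 0 < l) (hr : 0 < r)
    (hq : l⁻¹ * r ^ 2 ≤ q) (hs : 0 ≤ s) : q ^ (-(s / 2)) ≤ l ^ (s / 2) * r ^ (-s) := calc
  q ^ (-(s / 2)) ≤ (l⁻¹ * r ^ 2) ^ (-(s / 2)) :=
    Real.rpow_le_rpow_of_nonpos (by positivity) hq (by linarith)
  _ = l ^ (s / 2) * r ^ (-s) := by
    rw [Real.mul_rpow (by positivity) (by positivity), Real.inv_rpow hl.le, ← Real.rpow_neg hl.le,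
      neg_neg, ← Real.rpow_natCast_mul hr.le]
    congr 2
    push_cast
    ring

theorem hessian_rpow_coeff_le {n l r q : ℝ} (hn : 2 ≤ n) (hl : 1 ≤ l) (hr : 0 < r)
    (hq : l⁻¹ * r ^ 2 ≤ q) :
    (2 * |(2 - n) / 2| + 4 * |(2 - n) / 2 * ((2 - n) / 2 - 1)|) * l * q ^ ((2 - n) / 2 - 1) ≤
      (n - 2) * (n + 1) * l ^ ((n + 6) / 2) * r ^ (-n) := by
  have hl0 : 0 < l := by linarith
  calc
    _ = (n - 2) * (n + 1) * l * q ^ (-(n / 2)) := by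
      rw [abs_of_nonpos (by linarith), abs_of_nonneg (by nlinarith)]
      ring_nf
    _ ≤ (n - 2) * (n + 1) * l * (l ^ (n / 2) * r ^ (-n)) := by
      gcongr
      exact rpow_neg_half_le_of_inv_mul_sq_le hl0 hr hq (by linarith)
    _ = (n - 2) * (n + 1) * l ^ ((n + 2) / 2) * r ^ (-n) := by
      rw [add_div, Real.rpow_add hl0, div_self two_ne_zero, Real.rpow_one]
      ring
    _ ≤ _ := by
      gcongr
      norm_num

/-- For `n ≥ 3` and `σ` symmetric and uniformly elliptic with constant
`l ≥ 1`, the Hessian of `Γ_σ(x) = (⟨σ⁻¹x, x⟩)^((2-n)/2)` satisfies the operator-norm bound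
`‖D²Γ_σ(x)‖ ≤ (n-2)(n+1) l^((n+6)/2) |x|^(-n)` for every `x ≠ 0`. -/
theorem fundamental_solution_hessian_bound
    (n : ℕ) (hn : 3 ≤ n) (l : ℝ) (hl : 1 ≤ l)
    (σ : Matrix (Fin n) (Fin n) ℝ) (hσsymm : σ.IsSymm)
    (hell : ∀ ξ : EuclideanSpace ℝ (Fin n),
      l⁻¹ * ‖ξ‖ ^ 2 ≤ ∑ i, ∑ j, σ i j * ξ j * ξ i ∧
      ∑ i, ∑ j, σ i j * ξ j * ξ i ≤ l * ‖ξ‖ ^ 2)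
    (Γ : EuclideanSpace ℝ (Fin n) → ℝ)
    (hΓ : Γ = fun x => (∑ i, ∑ j, σ⁻¹ i j * x j * x i) ^ (((2 : ℝ) - n) / 2)) :
    ∀ x : EuclideanSpace ℝ (Fin n), x ≠ 0 →
      ‖fderiv ℝ (fun y => fderiv ℝ Γ y) x‖ ≤
        ((n : ℝ) - 2) * ((n : ℝ) + 1) * l ^ (((n : ℝ) + 6) / 2) * ‖x‖ ^ (-(n : ℝ)) := by
  intro x hx
  set T := toEuclideanCLM (𝕜 := ℝ) σ
  set A := toEuclideanCLM (𝕜 := ℝ) σ⁻¹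
  have hl0 : 0 < l := by linarith
  have hσ : σ.IsHermitian := isHermitian_iff_isSymm.2 hσsymm
  have hT : IsUniformlyElliptic T l := fun ξ => by
    simpa only [T, inner_toEuclideanCLM_apply_eq_sum] using hell ξ
  have hTA : Function.LeftInverse T A :=
    leftInverse_toEuclideanCLM_nonsing_inv ((MulEquiv.isUnit_map _).1 (hT.isUnit hl0))
  have hQx := hT.inv_mul_norm_sq_le_inner_of_leftInverse (hσ.isSelfAdjoint.map _).isSymmetric
    hl0 hTA x
  have hΓA : Γ = fun y => ⟪A y, y⟫ ^ (((2 : ℝ) - n) / 2) := by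
    simp only [hΓ, A, inner_toEuclideanCLM_apply_eq_sum]
  subst hΓA
  have hQpos : 0 < ⟪A x, x⟫ := (by positivity : 0 < l⁻¹ * ‖x‖ ^ 2).trans_le hQx
  refine (norm_fderiv_fderiv_rpow_inner_apply_self_le (A := A)
    (hσ.inv.isSelfAdjoint.map _).isSymmetric _ (hT.norm_sq_apply_le_of_leftInverse hl0 hTA)
    hQpos).trans ?_
  exact hessian_rpow_coeff_le (by exact_mod_cast (by omega : 2 ≤ n)) hl (norm_pos_iff.2 hx) hQx
end
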